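/- Let b, σ₀, γ, β > 0 and T ∈ ℝ. Define the constants A₁ = (b²/(4βσ₀²))·log(2√(1 + 4γσ₀²/b²) + 2 + 4γσ₀²/b²) + (γ/β)·log(b/(2σ₀²)) − (b²/(4βσ₀²))·√(1 + 4γσ₀²/b²) − γ/β + (γ/β)·log(√(1 + 4γσ₀²/b²) + 1), A₂ = b²/(4σ₀²), A₃ = −b²/(4βσ₀²), A₄ = b²/(4βσ₀²), A₅ = −γ/β, A₆ = γ/β − (γ/β)·log(b/(2σ₀²)), and the function C : ℝ → ℝ, C(t) = A₁·e^{β(t−T)} + A₂·(T−t)·e^{β(t−T)} + A₃·e^{β(t−T)}·log(2√(e^{2β(t−T)} + (4γσ₀²/b²)·e^{β(t−T)}) + 2e^{β(t−T)} + 4γσ₀²/b²) + A₄·e^{β(t−T)}·√(1 + (4γσ₀²/b²)·e^{−β(t−T)}) + A₅·log(√(1 + (4γσ₀²/b²)·e^{−β(t−T)}) + 1) + A₆. Then C(T) = 0, and C is differentiable on ℝ with, for every t, C′(t) − β·C(t) + (b²/(4σ₀²))·e^{β(t−T)} + γ/2 + (b/2)·√((b/(2σ₀²))²·e^{2β(t−T)}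 + (γ/σ₀²)·e^{β(t−T)}) − γ·log(√((b/(2σ₀²))² + (γ/σ₀²)·e^{−β(t−T)}) + b/(2σ₀²)) = 0. -/

import Mathlib

open Real

/-! With `E = e^{β(t-T)}`, `k = 4γσ₀²/b²` and `S = √(1 + k e^{-β(t-T)})` one has
`E (S² - 1) = k`, i.e. `γ = (b²/(4σ₀²)) E (S² - 1)`. The argument of the big logarithm in `C`
is the perfect square `E (S + 1)²`, so that logarithm has derivative `β / S`, and the radicals
in the ODE are `(b/(2σ₀²)) E S` and `(b/(2σ₀²)) (S + 1)`. Differentiating `C` term by term turns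
the ODE into a rational identity in `E` and `S`, which is exactly the relation above. -/

/-- The explicit function `C(t)` of the non-LQ mean-field control example. -/
noncomputable def Cfun (b σ₀ γ β T : ℝ) : ℝ → ℝ := fun t =>
  -- A₁ · e^{β(t−T)}
  (b ^ 2 / (4 * β * σ₀ ^ 2) *
      Real.log (2 * Real.sqrt (1 + 4 * γ * σ₀ ^ 2 / b ^ 2) + 2 + 4 * γ * σ₀ ^ 2 / b ^ 2)
    + γ / β * Real.log (b / (2 * σ₀ ^ 2))
    - b ^ 2 / (4 * β * σ₀ ^ 2) * Real.sqrt (1 + 4 * γ * σ₀ ^ 2 / b ^ 2)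
    - γ / β
    + γ / β * Real.log (Real.sqrt (1 + 4 * γ * σ₀ ^ 2 / b ^ 2) + 1)) * Real.exp (β * (t - T))
  -- A₂ · (T−t) · e^{β(t−T)}
  + b ^ 2 / (4 * σ₀ ^ 2) * (T - t) * Real.exp (β * (t - T))
  -- A₃ · e^{β(t−T)} · log(2√(e^{2β(t−T)} + (4γσ₀²/b²)e^{β(t−T)}) + 2e^{β(t−T)} + 4γσ₀²/b²)
  + (-(b ^ 2 / (4 * β * σ₀ ^ 2))) * Real.exp (β * (t - T)) *
      Real.log (2 * Real.sqrt (Real.exp (2 * β * (t - T))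
            + 4 * γ * σ₀ ^ 2 / b ^ 2 * Real.exp (β * (t - T)))
        + 2 * Real.exp (β * (t - T)) + 4 * γ * σ₀ ^ 2 / b ^ 2)
  -- A₄ · e^{β(t−T)} · √(1 + (4γσ₀²/b²)e^{−β(t−T)})
  + b ^ 2 / (4 * β * σ₀ ^ 2) * Real.exp (β * (t - T)) *
      Real.sqrt (1 + 4 * γ * σ₀ ^ 2 / b ^ 2 * Real.exp (-(β * (t - T))))
  -- A₅ · log(√(1 + (4γσ₀²/b²)e^{−β(t−T)}) + 1)
  + (-(γ / β)) *
      Real.log (Real.sqrt (1 + 4 * γ * σ₀ ^ 2 / b ^ 2 * Real.exp (-(β * (t - T)))) + 1)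
  -- A₆
  + (γ / β - γ / β * Real.log (b / (2 * σ₀ ^ 2)))

lemma hasDerivAt_exp_mul_sub (β T t : ℝ) :
    HasDerivAt (fun s => exp (β * (s - T))) (β * exp (β * (t - T))) t := by
  simpa [mul_comm] using (((hasDerivAt_id' t).sub_const T).const_mul β).exp

noncomputable def expRadical (k β T t : ℝ) : ℝ := √(1 + k * exp (-(β * (t - T))))

section expRadical

variable {k : ℝ} (β T t : ℝ)

lemma expRadical_sq (hk : 0 ≤ k) :
    expRadical k β T t ^ 2 = 1 + k * exp (-(β * (t - T))) :=
  sq_sqrt (by positivity)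

lemma expRadical_nonneg : 0 ≤ expRadical k β T t :=
  sqrt_nonneg _

lemma one_le_expRadical (hk : 0 ≤ k) : 1 ≤ expRadical k β T t :=
  one_le_sqrt.mpr (le_add_of_nonneg_right (by positivity))

lemma exp_mul_expRadical_sq_sub_one (hk : 0 ≤ k) :
    exp (β * (t - T)) * (expRadical k β T t ^ 2 - 1) = k := by
  rw [expRadical_sq β T t hk, add_sub_cancel_left, mul_left_comm, ← exp_add, add_neg_cancel,
    exp_zero, mul_one]

lemma sqrt_exp_two_mul_add :
    √(exp (2 * β * (t - T)) + k * exp (β * (t - T))) =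
      exp (β * (t - T)) * expRadical k β T t := by
  have h : exp (2 * β * (t - T)) + k * exp (β * (t - T)) =
      exp (β * (t - T)) ^ 2 * (1 + k * exp (-(β * (t - T)))) := by
    have hEF : exp (β * (t - T)) * exp (-(β * (t - T))) = 1 := by rw [← exp_add]; simp
    rw [show 2 * β * (t - T) = β * (t - T) + β * (t - T) by ring, exp_add]
    linear_combination (-(k * exp (β * (t - T)))) * hEF
  rw [h, sqrt_mul (by positivity), sqrt_sq (exp_pos _).le, expRadical]

lemma log_two_sqrt_exp_add (hk : 0 ≤ k) :
    log (2 * √(exp (2 * β * (t - T)) + k * exp (β * (t - T))) + 2 * exp (β * (t - T)) + k) =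
      β * (t - T) + 2 * log (expRadical k β T t + 1) := by
  have hS := one_le_expRadical β T t hk
  have h : 2 * √(exp (2 * β * (t - T)) + k * exp (β * (t - T))) + 2 * exp (β * (t - T)) + k =
      exp (β * (t - T)) * (expRadical k β T t + 1) ^ 2 := by
    rw [sqrt_exp_two_mul_add β T t]
    linear_combination -exp_mul_expRadical_sq_sub_one β T t hk
  rw [h, log_mul (exp_pos _).ne' (by positivity), log_exp, log_pow]
  push_cast
  ring

lemma hasDerivAt_expRadical (hk : 0 ≤ k) :
    HasDerivAt (expRadical k β T)
      (-β * (expRadical k β T t ^ 2 - 1) / (2 * expRadical k β T t)) t := by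
  have hS := one_le_expRadical β T t hk
  have h := (((hasDerivAt_exp_mul_sub (-β) T t).const_mul k).const_add 1).sqrt
    (by positivity : 1 + k * exp (-β * (t - T)) ≠ 0)
  simp only [neg_mul] at h
  convert h using 1
  · exact rfl
  rw [expRadical_sq β T t hk]
  simp only [expRadical]
  ring

lemma hasDerivAt_log_expRadical_add_one (hk : 0 ≤ k) :
    HasDerivAt (fun s => log (expRadical k β T s + 1))
      (-β * (expRadical k β T t - 1) / (2 * expRadical k β T t)) t := by
  have hS := one_le_expRadical β T t hk
  convert ((hasDerivAt_expRadical β T t hk).add_const 1).log (by positivity) using 1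
  field_simp
  ring

lemma hasDerivAt_log_two_sqrt_exp_add (hk : 0 ≤ k) :
    HasDerivAt
      (fun s => log (2 * √(exp (2 * β * (s - T)) + k * exp (β * (s - T)))
        + 2 * exp (β * (s - T)) + k))
      (β / expRadical k β T t) t := by
  have hS := one_le_expRadical β T t hk
  simp only [log_two_sqrt_exp_add β T _ hk]
  refine ((((hasDerivAt_id' t).sub_const T).const_mul β).add
    ((hasDerivAt_log_expRadical_add_one β T t hk).const_mul 2)).congr_deriv ?_
  field_simp
  ring

end expRadical

lemma Cfun_self (b σ₀ γ β T : ℝ) : Cfun b σ₀ γ β T T = 0 := by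
  simp only [Cfun, sub_self, mul_zero, exp_zero, neg_zero, mul_one]
  ring

section Cfun

variable {b σ₀ γ β : ℝ} (T t : ℝ)

lemma eq_mul_exp_mul_expRadical_sq_sub_one (hb : b ≠ 0) (hσ : σ₀ ≠ 0) (hγ : 0 ≤ γ) :
    γ = b ^ 2 / (4 * σ₀ ^ 2) * exp (β * (t - T)) *
      (expRadical (4 * γ * σ₀ ^ 2 / b ^ 2) β T t ^ 2 - 1) := by
  rw [mul_assoc, exp_mul_expRadical_sq_sub_one β T t (by positivity)]
  field_simp

theorem hasDerivAt_Cfun (hb : b ≠ 0) (hσ : σ₀ ≠ 0) (hγ : 0 ≤ γ) (hβ : β ≠ 0) :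
    HasDerivAt (Cfun b σ₀ γ β T)
      (β * Cfun b σ₀ γ β T t
        - b ^ 2 / (4 * σ₀ ^ 2) * exp (β * (t - T)) *
            (1 + expRadical (4 * γ * σ₀ ^ 2 / b ^ 2) β T t)
        - γ / 2
        + γ * (log (b / (2 * σ₀ ^ 2)) + log (expRadical (4 * γ * σ₀ ^ 2 / b ^ 2) β T t + 1))) t := by
  have hk : 0 ≤ 4 * γ * σ₀ ^ 2 / b ^ 2 := by positivity
  have hS := one_le_expRadical β T t hk
  have hE := hasDerivAt_exp_mul_sub β T t
  refine HasDerivAt.congr_deriv (f := Cfun b σ₀ γ β T)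
    (((((hE.const_mul _
      |>.add ((((hasDerivAt_id' t).const_sub T).const_mul _).mul hE))
      |>.add ((hE.const_mul _).mul (hasDerivAt_log_two_sqrt_exp_add β T t hk)))
      |>.add ((hE.const_mul _).mul (hasDerivAt_expRadical β T t hk)))
      |>.add ((hasDerivAt_log_expRadical_add_one β T t hk).const_mul _))
      |>.add_const _) ?_
  have hγE := eq_mul_exp_mul_expRadical_sq_sub_one (β := β) T t hb hσ hγ
  simp only [Cfun, expRadical] at hγE hS ⊢
  generalize √(1 + 4 * γ * σ₀ ^ 2 / b ^ 2 * exp (-(β * (t - T)))) = S at hγE hS ⊢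
  have hS0 : S ≠ 0 := by positivity
  rw [hγE]
  field_simp
  ring

lemma sqrt_sq_mul_exp_two_mul_add (hb : 0 < b) (hσ : σ₀ ≠ 0) :
    √((b / (2 * σ₀ ^ 2)) ^ 2 * exp (2 * β * (t - T)) + γ / σ₀ ^ 2 * exp (β * (t - T))) =
      b / (2 * σ₀ ^ 2) * (exp (β * (t - T)) * expRadical (4 * γ * σ₀ ^ 2 / b ^ 2) β T t) := by
  have h : (b / (2 * σ₀ ^ 2)) ^ 2 * exp (2 * β * (t - T)) + γ / σ₀ ^ 2 * exp (β * (t - T)) =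
      (b / (2 * σ₀ ^ 2)) ^ 2 *
        (exp (2 * β * (t - T)) + 4 * γ * σ₀ ^ 2 / b ^ 2 * exp (β * (t - T))) := by
    field_simp
    ring
  rw [h, sqrt_mul (sq_nonneg _), sqrt_sq (by positivity), sqrt_exp_two_mul_add]

lemma log_sqrt_sq_add_mul_exp_add (hb : 0 < b) (hσ : σ₀ ≠ 0) :
    log (√((b / (2 * σ₀ ^ 2)) ^ 2 + γ / σ₀ ^ 2 * exp (-(β * (t - T)))) + b / (2 * σ₀ ^ 2)) =
      log (b / (2 * σ₀ ^ 2)) + log (expRadical (4 * γ * σ₀ ^ 2 / b ^ 2) β T t + 1) := by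
  have hS := expRadical_nonneg (k := 4 * γ * σ₀ ^ 2 / b ^ 2) β T t
  have h : (b / (2 * σ₀ ^ 2)) ^ 2 + γ / σ₀ ^ 2 * exp (-(β * (t - T))) =
      (b / (2 * σ₀ ^ 2)) ^ 2 * (1 + 4 * γ * σ₀ ^ 2 / b ^ 2 * exp (-(β * (t - T)))) := by
    field_simp
    ring
  rw [← log_mul (by positivity) (by positivity), mul_add_one, h, sqrt_mul (sq_nonneg _),
    sqrt_sq (by positivity), expRadical]

end Cfun

/-- For `b, σ₀, γ, β > 0` and `T ∈ ℝ`, the explicit function `C = Cfun`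
satisfies `C(T) = 0`, is differentiable on `ℝ`, and for every `t`,
`C′(t) − βC(t) + (b²/(4σ₀²))e^{β(t−T)} + γ/2
 + (b/2)√((b/(2σ₀²))²e^{2β(t−T)} + (γ/σ₀²)e^{β(t−T)})
 − γ log(√((b/(2σ₀²))² + (γ/σ₀²)e^{−β(t−T)}) + b/(2σ₀²)) = 0`. -/
theorem stmt16 (b σ₀ γ β T : ℝ) (hb : 0 < b) (hσ : 0 < σ₀) (hγ : 0 < γ) (hβ : 0 < β) :
    Cfun b σ₀ γ β T T = 0 ∧
    (∀ t : ℝ, DifferentiableAt ℝ (Cfun b σ₀ γ β T) t) ∧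
    ∀ t : ℝ,
      deriv (Cfun b σ₀ γ β T) t - β * Cfun b σ₀ γ β T t
        + b ^ 2 / (4 * σ₀ ^ 2) * Real.exp (β * (t - T)) + γ / 2
        + b / 2 * Real.sqrt ((b / (2 * σ₀ ^ 2)) ^ 2 * Real.exp (2 * β * (t - T))
            + γ / σ₀ ^ 2 * Real.exp (β * (t - T)))
        - γ * Real.log (Real.sqrt ((b / (2 * σ₀ ^ 2)) ^ 2
            + γ / σ₀ ^ 2 * Real.exp (-(β * (t - T)))) + b / (2 * σ₀ ^ 2)) = 0 := by
  have hC := fun t => hasDerivAt_Cfun T t hb.ne' hσ.ne' hγ.le hβ.ne'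
  refine ⟨Cfun_self b σ₀ γ β T, fun t => (hC t).differentiableAt, fun t => ?_⟩
  rw [(hC t).deriv, sqrt_sq_mul_exp_two_mul_add T t hb hσ.ne',
    log_sqrt_sq_add_mul_exp_add T t hb hσ.ne']
  ring
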